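/- arXiv:1906.03881 — 2 statements merged into one kernel-verified Lean document; each statement's English description precedes it below -/
import Mathlib

section
/- Let a > 0, let D denote the closed ball of radius a centered at 0 in ℝ², and let I ⊆ ℝ be a measurable set. Let u : ℝ × ℝ² → ℝ be continuously differentiable (of class C¹) with square-integrable gradient on I × D. Define the disk average ū(s) = (π a²)⁻¹ ∫_{D} u(s, y) dy. Then ∫_{I} (ū'(s))² ds ≤ (π a²)⁻¹ ∫_{I × D} ‖Du(x)‖² dx, where Du denotes the (Fréchet) derivative of u and ‖·‖ its operator norm. -/
open MeasureTheory Metric Real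

private lemma sq_integral_le_measure_mul {α : Type*} [MeasurableSpace α] (μ : Measure α)
    [IsFiniteMeasure μ] {g : α → ℝ} (hg : Integrable g μ)
    (hg2 : Integrable (fun x => g x ^ 2) μ) :
    (∫ x, g x ∂μ) ^ 2 ≤ (μ Set.univ).toReal * ∫ x, g x ^ 2 ∂μ := by
  set V := (μ Set.univ).toReal with hV
  rcases eq_or_lt_of_le (show (0:ℝ) ≤ V from ENNReal.toReal_nonneg) with h0 | hVpos
  · have hμ : μ = 0 := by
      rcases (ENNReal.toReal_eq_zero_iff _).mp h0.symm with h | h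
      · exact Measure.measure_univ_eq_zero.mp h
      · exact absurd h (measure_ne_top μ _)
    simp [hμ]
  · set m := (∫ x, g x ∂μ) / V with hm
    have key : 0 ≤ ∫ x, (g x - m) ^ 2 ∂μ := integral_nonneg fun x => sq_nonneg _
    have expand : ∫ x, (g x - m) ^ 2 ∂μ
        = ∫ x, g x ^ 2 ∂μ - 2 * m * ∫ x, g x ∂μ + V * m ^ 2 := by
      have hgm : Integrable (fun x => 2 * m * g x) μ := hg.const_mul _
      have hsub : Integrable (fun x => g x ^ 2 - 2 * m * g x) μ := hg2.sub hgm
      have h1 : (fun x => (g x - m) ^ 2)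
          = fun x => (g x ^ 2 - 2 * m * g x) + m ^ 2 := funext fun x => by ring
      rw [h1, integral_add hsub (integrable_const (m ^ 2)),
        integral_sub hg2 hgm, integral_const_mul, integral_const]
      simp [hV, smul_eq_mul, Measure.real]
    rw [expand, hm] at key
    have hVne : V ≠ 0 := ne_of_gt hVpos
    set S := ∫ x, g x ∂μ
    set Q := ∫ x, g x ^ 2 ∂μ
    have h2 : 0 ≤ Q * V - S ^ 2 := by
      have h3 : Q - 2 * (S / V) * S + V * (S / V) ^ 2 = Q - S ^ 2 / V := by
        field_simp; ring
      rw [h3] at key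
      have := mul_nonneg key hVpos.le
      rw [sub_mul, div_mul_cancel₀ _ hVne] at this
      linarith
    nlinarith [h2]

set_option maxHeartbeats 1000000 in
theorem disk_average_deriv_L2_bound (a : ℝ) (ha : 0 < a)
    (I : Set ℝ) (hI : MeasurableSet I)
    (u : ℝ × EuclideanSpace ℝ (Fin 2) → ℝ) (hu : ContDiff ℝ 1 u)
    (hgrad : IntegrableOn (fun x => ‖fderiv ℝ u x‖ ^ 2)
      (I ×ˢ (closedBall (0 : EuclideanSpace ℝ (Fin 2)) a)))
    (ubar : ℝ → ℝ)
    (hubar : ∀ s, ubar s =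
      (π * a ^ 2)⁻¹ * ∫ y in closedBall (0 : EuclideanSpace ℝ (Fin 2)) a, u (s, y)) :
    ∫ s in I, (deriv ubar s) ^ 2 ≤
      (π * a ^ 2)⁻¹ *
        ∫ x in I ×ˢ (closedBall (0 : EuclideanSpace ℝ (Fin 2)) a), ‖fderiv ℝ u x‖ ^ 2 := by
  set D : Set (EuclideanSpace ℝ (Fin 2)) := closedBall 0 a with hD
  have hDm : MeasurableSet D := measurableSet_closedBall
  have hDc : IsCompact D := isCompact_closedBall _ _
  haveI hfin : IsFiniteMeasure (volume.restrict D) :=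
    ⟨by rw [Measure.restrict_apply_univ]; exact hDc.measure_lt_top⟩
  have hDvol : (volume D).toReal = π * a ^ 2 := by
    rw [hD, EuclideanSpace.volume_closedBall, Fintype.card_fin,
      show ((2:ℕ):ℝ)/2 + 1 = 2 by norm_num, Real.Gamma_two, sq_sqrt pi_nonneg,
      ENNReal.toReal_mul, ENNReal.toReal_pow, ENNReal.toReal_ofReal ha.le,
      ENNReal.toReal_ofReal (by positivity)]
    ring
  set c : ℝ := (π * a ^ 2)⁻¹ with hc
  have hπa : (0:ℝ) < π * a ^ 2 := by positivity
  have hcpos : 0 < c := inv_pos.mpr hπa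
  have hdiff : Differentiable ℝ u := hu.differentiable one_ne_zero
  have hfc : Continuous (fun x => fderiv ℝ u x) := hu.continuous_fderiv one_ne_zero
  set p : ℝ × EuclideanSpace ℝ (Fin 2) → ℝ := fun x => fderiv ℝ u x (1, 0) with hp
  have hpcont : Continuous p := hfc.clm_apply continuous_const
  have hone : ‖((1:ℝ), (0 : EuclideanSpace ℝ (Fin 2)))‖ = 1 := by
    simp [Prod.norm_def]
  have hple : ∀ x, ‖p x‖ ≤ ‖fderiv ℝ u x‖ := by
    intro x
    calc ‖p x‖ ≤ ‖fderiv ℝ u x‖ * ‖((1:ℝ), (0 : EuclideanSpace ℝ (Fin 2)))‖ :=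
          (fderiv ℝ u x).le_opNorm _
      _ = ‖fderiv ℝ u x‖ := by rw [hone, mul_one]
  have hpd : ∀ (s : ℝ) (y : EuclideanSpace ℝ (Fin 2)),
      HasDerivAt (fun t => u (t, y)) (p (s, y)) s := by
    intro s y
    have h1 : HasDerivAt (fun t : ℝ => ((t, y) : ℝ × EuclideanSpace ℝ (Fin 2)))
        ((1:ℝ), (0 : EuclideanSpace ℝ (Fin 2))) s :=
      (hasDerivAt_id s).prodMk (hasDerivAt_const s y)
    exact (hdiff (s, y)).hasFDerivAt.comp_hasDerivAt s h1
  have hder : ∀ s : ℝ, HasDerivAt (fun t => ∫ y in D, u (t, y)) (∫ y in D, p (s, y)) s := by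
    intro s
    obtain ⟨C, hC⟩ : ∃ C, ∀ x ∈ (Metric.closedBall s 1) ×ˢ D, ‖fderiv ℝ u x‖ ≤ C :=
      ((isCompact_closedBall s 1).prod hDc).exists_bound_of_continuousOn hfc.continuousOn
    have hFmeas : ∀ᶠ t in nhds s, AEStronglyMeasurable (fun y => u (t, y)) (volume.restrict D) :=
      Filter.Eventually.of_forall fun t =>
        (hu.continuous.comp (continuous_const.prodMk continuous_id)).aestronglyMeasurable
    have hFint : Integrable (fun y => u (s, y)) (volume.restrict D) :=
      ((hu.continuous.comp (continuous_const.prodMk continuous_id)).continuousOn).integrableOn_compact hDc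
    have hF'meas : AEStronglyMeasurable (fun y => p (s, y)) (volume.restrict D) :=
      (hpcont.comp (continuous_const.prodMk continuous_id)).aestronglyMeasurable
    have hbound : ∀ᵐ y ∂(volume.restrict D), ∀ x ∈ ball s 1, ‖p (x, y)‖ ≤ C := by
      refine (ae_restrict_iff' hDm).mpr (Filter.Eventually.of_forall fun y hy => ?_)
      intro x hx
      exact (hple (x, y)).trans (hC (x, y) ⟨ball_subset_closedBall hx, hy⟩)
    have hdd : ∀ᵐ y ∂(volume.restrict D), ∀ x ∈ ball s 1,
        HasDerivAt (fun t => u (t, y)) (p (x, y)) x :=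
      Filter.Eventually.of_forall fun y x _ => hpd x y
    have key := hasDerivAt_integral_of_dominated_loc_of_deriv_le (𝕜 := ℝ)
      (μ := volume.restrict D) (F := fun t y => u (t, y)) (F' := fun t y => p (t, y))
      (bound := fun _ => C) (x₀ := s) (s := ball s 1) (ball_mem_nhds s one_pos) hFmeas hFint hF'meas
      hbound (integrable_const C) hdd
    exact key.2
  have hub : ∀ s, HasDerivAt ubar (c * ∫ y in D, p (s, y)) s := by
    intro s
    have hue : ubar = fun t => c * ∫ y in D, u (t, y) := funext fun t => hubar t
    rw [hue]
    exact (hder s).const_mul c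
  have hderiv_ubar : ∀ s, deriv ubar s = c * ∫ y in D, p (s, y) := fun s => (hub s).deriv
  -- pointwise bound
  have hpt : ∀ s, (deriv ubar s) ^ 2 ≤ c * ∫ y in D, ‖fderiv ℝ u (s, y)‖ ^ 2 := by
    intro s
    set g : EuclideanSpace ℝ (Fin 2) → ℝ := fun y => ‖fderiv ℝ u (s, y)‖ with hg
    have hgc : Continuous g := (hfc.comp (continuous_const.prodMk continuous_id)).norm
    have hgint : Integrable g (volume.restrict D) := hgc.continuousOn.integrableOn_compact hDc
    have hg2int : Integrable (fun y => g y ^ 2) (volume.restrict D) :=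
      (hgc.pow 2).continuousOn.integrableOn_compact hDc
    have h1 : ‖∫ y in D, p (s, y)‖ ≤ ∫ y in D, g y :=
      norm_integral_le_of_norm_le hgint (Filter.Eventually.of_forall fun y => hple (s, y))
    have h2 : (∫ y in D, g y) ^ 2 ≤ (π * a ^ 2) * ∫ y in D, g y ^ 2 := by
      have := sq_integral_le_measure_mul (volume.restrict D) hgint hg2int
      rwa [Measure.restrict_apply_univ, hDvol] at this
    have h3 : (∫ y in D, p (s, y)) ^ 2 ≤ (∫ y in D, g y) ^ 2 := by
      rw [← sq_abs (∫ y in D, p (s, y))]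
      have habs : |∫ y in D, p (s, y)| ≤ ∫ y in D, g y := h1
      exact pow_le_pow_left₀ (abs_nonneg _) habs 2
    calc (deriv ubar s) ^ 2 = c ^ 2 * (∫ y in D, p (s, y)) ^ 2 := by
          rw [hderiv_ubar]; ring
      _ ≤ c ^ 2 * ((π * a ^ 2) * ∫ y in D, g y ^ 2) := by
          apply mul_le_mul_of_nonneg_left (h3.trans h2) (sq_nonneg c)
      _ = c * ∫ y in D, g y ^ 2 := by
          rw [hc]; field_simp
  -- Fubini setup
  have hgrad' : Integrable (fun z : ℝ × EuclideanSpace ℝ (Fin 2) => ‖fderiv ℝ u z‖ ^ 2)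
      ((volume.restrict I).prod (volume.restrict D)) := by
    rw [Measure.prod_restrict]
    rwa [IntegrableOn, Measure.volume_eq_prod] at hgrad
  have hGint : Integrable (fun s => ∫ y in D, ‖fderiv ℝ u (s, y)‖ ^ 2) (volume.restrict I) :=
    hgrad'.integral_prod_left
  have hFub : ∫ s in I, ∫ y in D, ‖fderiv ℝ u (s, y)‖ ^ 2
      = ∫ x in I ×ˢ D, ‖fderiv ℝ u x‖ ^ 2 := by
    rw [show (volume : Measure (ℝ × EuclideanSpace ℝ (Fin 2))).restrict (I ×ˢ D)
        = (volume.restrict I).prod (volume.restrict D) by rw [Measure.prod_restrict, Measure.volume_eq_prod]]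
    exact (integral_prod _ hgrad').symm
  calc ∫ s in I, (deriv ubar s) ^ 2
      ≤ ∫ s in I, c * ∫ y in D, ‖fderiv ℝ u (s, y)‖ ^ 2 := by
        refine integral_mono_of_nonneg (Filter.Eventually.of_forall fun s => sq_nonneg _)
          (hGint.const_mul c) (Filter.Eventually.of_forall fun s => hpt s)
    _ = c * ∫ s in I, ∫ y in D, ‖fderiv ℝ u (s, y)‖ ^ 2 := integral_const_mul c _
    _ = c * ∫ x in I ×ˢ D, ‖fderiv ℝ u x‖ ^ 2 := by rw [hFub]
end

section
/- Let Ω ⊆ ℝ³ be a bounded open set, let Ω_f ⊆ Ω be a measurable set, and let 0 < c_Ω < c_f be constants. Then there exists α > 0, depending only on Ω, c_Ω and c_f, such that for every continuously differentiable function u : ℝ³ → ℝ³ with compact support contained in Ω, c_Ω ∫_{Ω} ‖Du(x)‖² dx + (c_f − c_Ω) ∫_{Ω_f} ‖Du(x)‖² dx ≥ α · ( ∫_{Ω} (‖u(x)‖² + ‖Du(x)‖²) dx + ∫_{Ω_f} (‖u(x)‖² + ‖Du(x)‖²) dx ). -/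
open MeasureTheory
open scoped ENNReal NNReal

private lemma sq_toReal_eLpNorm {α : Type*} [MeasurableSpace α] {μ : Measure α}
    {H : Type*} [NormedAddCommGroup H] {f : α → H} (hf : MemLp f 2 μ) :
    ((eLpNorm f 2 μ).toReal) ^ 2 = ∫ x, ‖f x‖ ^ 2 ∂μ := by
  rw [hf.eLpNorm_eq_integral_rpow_norm two_ne_zero ENNReal.ofNat_ne_top]
  have h2 : (2 : ℝ≥0∞).toReal = 2 := by simp
  rw [h2]
  have hnn : 0 ≤ ∫ x, ‖f x‖ ^ (2 : ℝ) ∂μ :=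
    integral_nonneg fun x => Real.rpow_nonneg (norm_nonneg _) _
  rw [ENNReal.toReal_ofReal (Real.rpow_nonneg hnn _)]
  rw [← Real.rpow_natCast (_ ^ (2 : ℝ)⁻¹) 2, ← Real.rpow_mul hnn]
  norm_num

/-- A Poincaré-type inequality obtained from the Gagliardo–Nirenberg–Sobolev inequality. -/
private lemma poincare_sq (Ω : Set (EuclideanSpace ℝ (Fin 3)))
    (hΩb : Bornology.IsBounded Ω) :
    ∃ K : ℝ, 0 ≤ K ∧ ∀ u : EuclideanSpace ℝ (Fin 3) → EuclideanSpace ℝ (Fin 3),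
      ContDiff ℝ 1 u → HasCompactSupport u → tsupport u ⊆ Ω →
      (∫ x, ‖u x‖ ^ 2) ≤ K * ∫ x, ‖fderiv ℝ u x‖ ^ 2 := by
  set C : ℝ≥0 :=
    eLpNormLESNormFDerivOfLeConst (EuclideanSpace ℝ (Fin 3)) volume Ω 2 2 with hC
  refine ⟨(C : ℝ) ^ 2, by positivity, fun u hu h2u hsupp => ?_⟩
  have hsup : Function.support u ⊆ Ω := (subset_tsupport u).trans hsupp
  have hfr : (2 : ℝ≥0) < (Module.finrank ℝ (EuclideanSpace ℝ (Fin 3)) : ℝ≥0) := by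
    rw [finrank_euclideanSpace_fin]; norm_num
  have hpq : ((2 : ℝ≥0) : ℝ)⁻¹ - ((Module.finrank ℝ (EuclideanSpace ℝ (Fin 3)) : ℝ))⁻¹
      ≤ ((2 : ℝ≥0) : ℝ)⁻¹ := by
    have : (0:ℝ) ≤ ((Module.finrank ℝ (EuclideanSpace ℝ (Fin 3)) : ℝ))⁻¹ := by positivity
    linarith
  have key := eLpNorm_le_eLpNorm_fderiv_of_le (μ := (volume : Measure (EuclideanSpace ℝ (Fin 3))))
    hu hsup (p := 2) (q := 2) (by norm_num) hfr hpq hΩb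
  have hmu : MemLp u 2 (volume : Measure (EuclideanSpace ℝ (Fin 3))) :=
    hu.continuous.memLp_of_hasCompactSupport h2u
  have hmd : MemLp (fderiv ℝ u) 2 (volume : Measure (EuclideanSpace ℝ (Fin 3))) :=
    (hu.continuous_fderiv one_ne_zero).memLp_of_hasCompactSupport (h2u.fderiv (𝕜 := ℝ))
  have h2 : ((2 : ℝ≥0) : ℝ≥0∞) = (2 : ℝ≥0∞) := by norm_num
  rw [h2] at key
  have hfin : C * eLpNorm (fderiv ℝ u) 2 volume ≠ ⊤ :=
    ENNReal.mul_ne_top ENNReal.coe_ne_top hmd.eLpNorm_ne_top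
  have key' : (eLpNorm u 2 volume).toReal ≤
      (C : ℝ) * (eLpNorm (fderiv ℝ u) 2 volume).toReal := by
    have := ENNReal.toReal_mono hfin key
    rwa [ENNReal.toReal_mul, ENNReal.coe_toReal] at this
  have h1 := sq_toReal_eLpNorm hmu
  have h2' := sq_toReal_eLpNorm hmd
  calc (∫ x, ‖u x‖ ^ 2) = ((eLpNorm u 2 volume).toReal) ^ 2 := h1.symm
    _ ≤ ((C : ℝ) * (eLpNorm (fderiv ℝ u) 2 volume).toReal) ^ 2 := by
        apply pow_le_pow_left₀ ENNReal.toReal_nonneg key'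
    _ = (C : ℝ) ^ 2 * ((eLpNorm (fderiv ℝ u) 2 volume).toReal) ^ 2 := by ring
    _ = (C : ℝ) ^ 2 * ∫ x, ‖fderiv ℝ u x‖ ^ 2 := by rw [h2']

theorem coercivity_on_kernel
    (Ω : Set (EuclideanSpace ℝ (Fin 3))) (hΩo : IsOpen Ω)
    (hΩb : Bornology.IsBounded Ω)
    (cΩ cf : ℝ) (hc0 : 0 < cΩ) (hccf : cΩ < cf) :
    ∃ α > 0, ∀ (Ωf : Set (EuclideanSpace ℝ (Fin 3))), Ωf ⊆ Ω → MeasurableSet Ωf →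
      ∀ u : EuclideanSpace ℝ (Fin 3) → EuclideanSpace ℝ (Fin 3),
        ContDiff ℝ 1 u → HasCompactSupport u → tsupport u ⊆ Ω →
        cΩ * (∫ x in Ω, ‖fderiv ℝ u x‖ ^ 2) +
            (cf - cΩ) * (∫ x in Ωf, ‖fderiv ℝ u x‖ ^ 2) ≥
          α * ((∫ x in Ω, (‖u x‖ ^ 2 + ‖fderiv ℝ u x‖ ^ 2)) +
            (∫ x in Ωf, (‖u x‖ ^ 2 + ‖fderiv ℝ u x‖ ^ 2))) := by
  obtain ⟨K, hK0, hP⟩ := poincare_sq Ω hΩb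
  refine ⟨cΩ / (2 * (K + 1)), by positivity, ?_⟩
  intro Ωf hΩf hΩfm u hu h2u hsupp
  set α := cΩ / (2 * (K + 1)) with hαdef
  have hα : 0 < α := by positivity
  -- continuity and compact support of the integrands
  have hcu : Continuous fun x => ‖u x‖ ^ 2 := (hu.continuous.norm).pow 2
  have hcd : Continuous fun x => ‖fderiv ℝ u x‖ ^ 2 :=
    ((hu.continuous_fderiv one_ne_zero).norm).pow 2
  have hsu : HasCompactSupport fun x => ‖u x‖ ^ 2 :=
    (h2u.norm).comp_left (g := fun y : ℝ => y ^ 2) (by norm_num)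
  have hsd : HasCompactSupport fun x => ‖fderiv ℝ u x‖ ^ 2 :=
    ((h2u.fderiv (𝕜 := ℝ)).norm).comp_left (g := fun y : ℝ => y ^ 2) (by norm_num)
  have hIu : Integrable (fun x => ‖u x‖ ^ 2)
      (volume : Measure (EuclideanSpace ℝ (Fin 3))) :=
    hcu.integrable_of_hasCompactSupport hsu
  have hId : Integrable (fun x => ‖fderiv ℝ u x‖ ^ 2)
      (volume : Measure (EuclideanSpace ℝ (Fin 3))) :=
    hcd.integrable_of_hasCompactSupport hsd
  set A := ∫ x in Ω, ‖u x‖ ^ 2 with hAdef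
  set B := ∫ x in Ω, ‖fderiv ℝ u x‖ ^ 2 with hBdef
  -- the set integrals over Ω equal the full integrals
  have hA : A = ∫ x, ‖u x‖ ^ 2 := by
    apply setIntegral_eq_integral_of_forall_compl_eq_zero
    intro x hx
    have : u x = 0 := image_eq_zero_of_notMem_tsupport (fun h => hx (hsupp h))
    simp [this]
  have hB : B = ∫ x, ‖fderiv ℝ u x‖ ^ 2 := by
    apply setIntegral_eq_integral_of_forall_compl_eq_zero
    intro x hx
    have hxn : x ∉ tsupport u := fun h => hx (hsupp h)
    have : fderiv ℝ u x = 0 := by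
      by_contra h
      exact hxn (support_fderiv_subset ℝ (Function.mem_support.mpr h))
    simp [this]
  -- Poincaré inequality
  have hPoin : A ≤ K * B := by rw [hA, hB]; exact hP u hu h2u hsupp
  have hAnn : 0 ≤ A := by
    rw [hA]; exact integral_nonneg fun x => by positivity
  have hBnn : 0 ≤ B := by
    rw [hB]; exact integral_nonneg fun x => by positivity
  -- splitting the Ω integral
  have hsplit : (∫ x in Ω, (‖u x‖ ^ 2 + ‖fderiv ℝ u x‖ ^ 2)) = A + B :=
    integral_add hIu.integrableOn hId.integrableOn
  -- the Ωf integrals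
  have hIfnn : 0 ≤ ∫ x in Ωf, ‖fderiv ℝ u x‖ ^ 2 :=
    setIntegral_nonneg hΩfm fun x _ => by positivity
  have hmono : (∫ x in Ωf, (‖u x‖ ^ 2 + ‖fderiv ℝ u x‖ ^ 2)) ≤
      ∫ x in Ω, (‖u x‖ ^ 2 + ‖fderiv ℝ u x‖ ^ 2) := by
    apply setIntegral_mono_set (hIu.add hId).integrableOn
    · filter_upwards with x
      simp only [Pi.zero_apply, Pi.add_apply]
      positivity
    · exact Filter.Eventually.of_forall hΩf
  rw [ge_iff_le, hsplit]
  have h1 : α * ((A + B) + ∫ x in Ωf, (‖u x‖ ^ 2 + ‖fderiv ℝ u x‖ ^ 2)) ≤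
      α * (2 * (A + B)) := by
    apply mul_le_mul_of_nonneg_left _ hα.le
    rw [hsplit] at hmono
    linarith
  have h2 : α * (2 * (A + B)) ≤ α * (2 * ((K + 1) * B)) := by
    apply mul_le_mul_of_nonneg_left _ hα.le
    nlinarith
  have h3 : α * (2 * ((K + 1) * B)) = cΩ * B := by
    rw [hαdef]
    field_simp
  have h4 : cΩ * B ≤ cΩ * B + (cf - cΩ) * ∫ x in Ωf, ‖fderiv ℝ u x‖ ^ 2 := by
    nlinarith
  linarith
end
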